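/- arXiv:2405.20556 — 4 statements merged into one kernel-verified Lean document; each statement's English description precedes it below -/
import Mathlib

section
/- Let r ≥ 0 and suppose the sets {x | f(x) ≠ c(x)} and {x | ∃ x' with d(x', x) ≤ r, f(x') ≠ f(x)} are Borel measurable. Then the m1-robustness risk decomposes exactly as D(V₁(r)) = R_c + R_b(r), i.e. the robustness risk for metric m1 equals the classification risk plus the boundary risk. -/
open MeasureTheory

/-- The m1-robustness risk decomposes exactly as the classification risk plus the
boundary risk: `D(V₁(r)) = R_c + R_b(r)`. -/
theorem m1_risk_eq_classification_add_boundary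
    {m n : ℕ} (D : Measure (EuclideanSpace ℝ (Fin m))) [IsProbabilityMeasure D]
    (f c : EuclideanSpace ℝ (Fin m) → Fin n) (r : ℝ) (hr : 0 ≤ r)
    (hmc : MeasurableSet {x : EuclideanSpace ℝ (Fin m) | f x ≠ c x})
    (hmb : MeasurableSet {x : EuclideanSpace ℝ (Fin m) |
      ∃ x', dist x' x ≤ r ∧ f x' ≠ f x}) :
    D {x | ∃ x', dist x' x ≤ r ∧ f x' ≠ c x} =
      D {x | f x ≠ c x} +
        D {x | f x = c x ∧ ∃ x', dist x' x ≤ r ∧ f x' ≠ f x} := by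
  have hset : {x : EuclideanSpace ℝ (Fin m) | ∃ x', dist x' x ≤ r ∧ f x' ≠ c x} =
      {x | f x ≠ c x} ∪ {x | f x = c x ∧ ∃ x', dist x' x ≤ r ∧ f x' ≠ f x} := by
    ext x
    simp only [Set.mem_setOf_eq, Set.mem_union]
    constructor
    · rintro ⟨x', hd, hne⟩
      by_cases h : f x = c x
      · exact Or.inr ⟨h, x', hd, h ▸ hne⟩
      · exact Or.inl h
    · rintro (h | ⟨heq, x', hd, hne⟩)
      · exact ⟨x, by simpa using hr, h⟩
      · exact ⟨x', hd, heq ▸ hne⟩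
  have hdisj : Disjoint {x : EuclideanSpace ℝ (Fin m) | f x ≠ c x}
      {x | f x = c x ∧ ∃ x', dist x' x ≤ r ∧ f x' ≠ f x} := by
    rw [Set.disjoint_left]
    rintro x hx ⟨heq, _⟩
    exact hx heq
  have hB : MeasurableSet {x : EuclideanSpace ℝ (Fin m) |
      f x = c x ∧ ∃ x', dist x' x ≤ r ∧ f x' ≠ f x} := by
    have : {x : EuclideanSpace ℝ (Fin m) | f x = c x ∧ ∃ x', dist x' x ≤ r ∧ f x' ≠ f x}
        = {x | f x ≠ c x}ᶜ ∩ {x | ∃ x', dist x' x ≤ r ∧ f x' ≠ f x} := by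
      ext x; simp [Set.mem_setOf_eq, and_comm, not_not]
    rw [this]
    exact hmc.compl.inter hmb
  rw [hset, measure_union hdisj hB]
end

section
/- Let r ≥ 0. Then the m0-robustness risk is bounded by the sum of the classification risk, the boundary risk, and the ground-truth boundary risk: D(V₀(r)) ≤ R_c + R_b(r) + R_gb(r). -/
open MeasureTheory

/-- If `x` is correctly classified and `f` is constant on the closed `r`-ball around `x`, then an
error of `f` inside that ball must be a change of the ground truth `c`. -/
theorem setOf_exists_near_ne_subset {X β : Type*} [PseudoMetricSpace X] (f c : X → β) (r : ℝ) :
    {x | ∃ x', dist x' x ≤ r ∧ f x' ≠ c x'} ⊆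
      {x | f x ≠ c x} ∪ {x | f x = c x ∧ ∃ x', dist x' x ≤ r ∧ f x' ≠ f x} ∪
        {x | f x = c x ∧ (∃ x', dist x' x ≤ r ∧ c x' ≠ c x) ∧
          ∀ x'', dist x'' x ≤ r → f x'' = f x} := by
  rintro x ⟨x', hx', hfc⟩
  by_cases hx : f x = c x
  · by_cases hb : ∃ x'', dist x'' x ≤ r ∧ f x'' ≠ f x
    · exact Or.inl (Or.inr ⟨hx, hb⟩)
    · push Not at hb
      refine Or.inr ⟨hx, ⟨x', hx', ?_⟩, hb⟩
      rwa [hb x' hx', hx, ne_comm] at hfc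
  · exact Or.inl (Or.inl hx)

theorem m0_risk_le_sum_of_risks_general
    {m n : ℕ} (D : Measure (EuclideanSpace ℝ (Fin m)))
    (f c : EuclideanSpace ℝ (Fin m) → Fin n) (r : ℝ) :
    D {x | ∃ x', dist x' x ≤ r ∧ f x' ≠ c x'} ≤
      D {x | f x ≠ c x} +
        D {x | f x = c x ∧ ∃ x', dist x' x ≤ r ∧ f x' ≠ f x} +
        D {x | f x = c x ∧ (∃ x', dist x' x ≤ r ∧ c x' ≠ c x) ∧
          ∀ x'', dist x'' x ≤ r → f x'' = f x} :=
  (measure_mono (setOf_exists_near_ne_subset f c r)).trans <|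
    (measure_union_le _ _).trans (add_le_add_left (measure_union_le _ _) _)

/-- The m0-robustness risk is bounded by the sum of the classification risk, the
boundary risk, and the ground-truth boundary risk:
`D(V₀(r)) ≤ R_c + R_b(r) + R_gb(r)`. -/
theorem m0_risk_le_sum_of_risks
    {m n : ℕ} (D : Measure (EuclideanSpace ℝ (Fin m))) [IsProbabilityMeasure D]
    (f c : EuclideanSpace ℝ (Fin m) → Fin n) (r : ℝ) (hr : 0 ≤ r) :
    D {x | ∃ x', dist x' x ≤ r ∧ f x' ≠ c x'} ≤
      D {x | f x ≠ c x} +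
        D {x | f x = c x ∧ ∃ x', dist x' x ≤ r ∧ f x' ≠ f x} +
        D {x | f x = c x ∧ (∃ x', dist x' x ≤ r ∧ c x' ≠ c x) ∧
          ∀ x'', dist x'' x ≤ r → f x'' = f x} :=
  m0_risk_le_sum_of_risks_general D f c r
end

section
/- Let r ≥ 0 and suppose the r-neighbourhoods of the two decision boundaries are disjoint, i.e. no x ∈ X satisfies both (∃ x' with d(x', x) ≤ r and f(x') ≠ f(x)) and (∃ x' with d(x', x) ≤ r and c(x') ≠ c(x)). Suppose moreover the sets {x | f(x) ≠ c(x)}, {x | ∃ x' with d(x', x) ≤ r, f(x') ≠ f(x)}, and {x | ∃ x' with d(x', x) ≤ r, c(x') ≠ c(x)} are Borel measurable. Then the m0-robustness risk decomposes exactly: D(V₀(r)) = R_c + R_b(r) + R_gb(r). -/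
open MeasureTheory

/-- If the `r`-neighbourhoods of the classifier's decision boundary and of the ground
truth decision boundary are disjoint, then the m0-robustness risk decomposes exactly:
`D(V₀(r)) = R_c + R_b(r) + R_gb(r)`. -/
theorem m0_risk_eq_sum_of_risks
    {m n : ℕ} (D : Measure (EuclideanSpace ℝ (Fin m))) [IsProbabilityMeasure D]
    (f c : EuclideanSpace ℝ (Fin m) → Fin n) (r : ℝ) (hr : 0 ≤ r)
    (hdisj : ∀ x : EuclideanSpace ℝ (Fin m),
      ¬((∃ x', dist x' x ≤ r ∧ f x' ≠ f x) ∧ (∃ x', dist x' x ≤ r ∧ c x' ≠ c x)))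
    (hmc : MeasurableSet {x : EuclideanSpace ℝ (Fin m) | f x ≠ c x})
    (hmb : MeasurableSet {x : EuclideanSpace ℝ (Fin m) |
      ∃ x', dist x' x ≤ r ∧ f x' ≠ f x})
    (hgb : MeasurableSet {x : EuclideanSpace ℝ (Fin m) |
      ∃ x', dist x' x ≤ r ∧ c x' ≠ c x}) :
    D {x | ∃ x', dist x' x ≤ r ∧ f x' ≠ c x'} =
      D {x | f x ≠ c x} +
        D {x | f x = c x ∧ ∃ x', dist x' x ≤ r ∧ f x' ≠ f x} +
        D {x | f x = c x ∧ (∃ x', dist x' x ≤ r ∧ c x' ≠ c x) ∧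
          ∀ x'', dist x'' x ≤ r → f x'' = f x} := by
  classical
  have hAc : MeasurableSet {x : EuclideanSpace ℝ (Fin m) | f x = c x} := by
    have h : {x : EuclideanSpace ℝ (Fin m) | f x = c x} = {x : EuclideanSpace ℝ (Fin m) | f x ≠ c x}ᶜ := by
      ext x; simp
    rw [h]; exact hmc.compl
  have hR : MeasurableSet {x : EuclideanSpace ℝ (Fin m) | ∀ x'', dist x'' x ≤ r → f x'' = f x} := by
    have h : {x : EuclideanSpace ℝ (Fin m) | ∀ x'', dist x'' x ≤ r → f x'' = f x}
        = {x : EuclideanSpace ℝ (Fin m) | ∃ x', dist x' x ≤ r ∧ f x' ≠ f x}ᶜ := by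
      ext x; simp
    rw [h]; exact hmb.compl
  set A := {x : EuclideanSpace ℝ (Fin m) | f x ≠ c x} with hA
  set B := {x : EuclideanSpace ℝ (Fin m) | f x = c x ∧ ∃ x', dist x' x ≤ r ∧ f x' ≠ f x} with hBdef
  set C := {x : EuclideanSpace ℝ (Fin m) | f x = c x ∧ (∃ x', dist x' x ≤ r ∧ c x' ≠ c x) ∧
      ∀ x'', dist x'' x ≤ r → f x'' = f x} with hCdef
  have hB : MeasurableSet B := hAc.inter hmb
  have hC : MeasurableSet C := hAc.inter (hgb.inter hR)
  have hdBC : Disjoint B C := by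
    rw [Set.disjoint_left]
    rintro x ⟨_, x', hd, hne⟩ ⟨_, _, hall⟩
    exact hne (hall x' hd)
  have hdABC : Disjoint A (B ∪ C) := by
    rw [Set.disjoint_left]
    rintro x hx (⟨h, _⟩ | ⟨h, _⟩) <;> exact hx h
  have hset : {x : EuclideanSpace ℝ (Fin m) | ∃ x', dist x' x ≤ r ∧ f x' ≠ c x'} = A ∪ (B ∪ C) := by
    ext x
    constructor
    · rintro ⟨x', hd, hne⟩
      by_cases hfc : f x = c x
      · by_cases hff : f x' = f x
        · right; right
          have hcc : c x' ≠ c x := by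
            intro h
            exact hne (by rw [hff, hfc, h])
          refine ⟨hfc, ⟨x', hd, hcc⟩, ?_⟩
          intro x'' hd''
          by_contra hcontra
          exact hdisj x ⟨⟨x'', hd'', hcontra⟩, ⟨x', hd, hcc⟩⟩
        · right; left; exact ⟨hfc, x', hd, hff⟩
      · left; exact hfc
    · rintro (hx | ⟨hfc, x', hd, hne⟩ | ⟨hfc, ⟨x', hd, hne⟩, hall⟩)
      · exact ⟨x, by simpa using hr, hx⟩
      · have hcc : c x' = c x := by
          by_contra hcontra
          exact hdisj x ⟨⟨x', hd, hne⟩, ⟨x', hd, hcontra⟩⟩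
        exact ⟨x', hd, by rw [hcc, ← hfc]; exact hne⟩
      · exact ⟨x', hd, by rw [hall x' hd, hfc]; exact fun h => hne h.symm⟩
  rw [hset, measure_union hdABC (hB.union hC), measure_union hdBC hC, add_assoc]
end

section
/- Let r ≥ 0 and let ν : X → Measure X assign to each x a measure concentrated on the closed ball of radius r around x, i.e. ν(x)({x' | d(x', x) > r}) = 0 for every x. Then for every t ≥ 0, the relaxed global robustness risk is bounded by the strict one: D({x | ν(x)({x' | f(x') ≠ c(x)}) > t}) ≤ D(V₁(r)). -/
open MeasureTheory ENNReal
open scoped ENNReal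

theorem measure_setOf_eq_zero_of_forall_dist_le {X : Type*} [PseudoMetricSpace X]
    [MeasurableSpace X] {μ : Measure X} {x : X} {r : ℝ} (hμ : μ {y | r < dist y x} = 0)
    {p : X → Prop} (hp : ∀ y, dist y x ≤ r → ¬ p y) : μ {y | p y} = 0 :=
  measure_mono_null (fun y hy => not_le.1 fun hyx => hp y hyx hy) hμ

theorem setOf_lt_measure_ne_subset_exists_dist_le {X Y : Type*} [PseudoMetricSpace X]
    [MeasurableSpace X] (f c : X → Y) {r : ℝ} {ν : X → Measure X}
    (hν : ∀ x, ν x {x' | r < dist x' x} = 0) (t : ℝ≥0∞) :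
    {x | t < ν x {x' | f x' ≠ c x}} ⊆ {x | ∃ x', dist x' x ≤ r ∧ f x' ≠ c x} := by
  intro x hx
  by_contra hrobust
  have hnull : ν x {x' | f x' ≠ c x} = 0 :=
    measure_setOf_eq_zero_of_forall_dist_le (hν x) fun x' hx' hne => hrobust ⟨x', hx', hne⟩
  exact ENNReal.not_lt_zero (hnull ▸ hx : t < 0)

theorem relaxed_risk_le_strict_risk_general
    {m n : ℕ} (D : Measure (EuclideanSpace ℝ (Fin m)))
    (f c : EuclideanSpace ℝ (Fin m) → Fin n) (r : ℝ)
    (ν : EuclideanSpace ℝ (Fin m) → Measure (EuclideanSpace ℝ (Fin m)))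
    (hν : ∀ x, ν x {x' | r < dist x' x} = 0)
    (t : ℝ≥0∞) :
    D {x | t < ν x {x' | f x' ≠ c x}} ≤
      D {x | ∃ x', dist x' x ≤ r ∧ f x' ≠ c x} :=
  measure_mono (setOf_lt_measure_ne_subset_exists_dist_le f c hν t)

/-- If each local perturbation measure `ν x` is concentrated on the closed ball of
radius `r` around `x`, then for every threshold `t`, the relaxed global robustness
risk is bounded by the strict one: `D({x | ν(x)({x' | f x' ≠ c x}) > t}) ≤ D(V₁(r))`. -/
theorem relaxed_risk_le_strict_risk
    {m n : ℕ} (D : Measure (EuclideanSpace ℝ (Fin m))) [IsProbabilityMeasure D]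
    (f c : EuclideanSpace ℝ (Fin m) → Fin n) (r : ℝ) (hr : 0 ≤ r)
    (ν : EuclideanSpace ℝ (Fin m) → Measure (EuclideanSpace ℝ (Fin m)))
    (hν : ∀ x, ν x {x' | r < dist x' x} = 0)
    (t : ℝ≥0∞) :
    D {x | t < ν x {x' | f x' ≠ c x}} ≤
      D {x | ∃ x', dist x' x ≤ r ∧ f x' ≠ c x} :=
  relaxed_risk_le_strict_risk_general D f c r ν hν t
end
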